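/- arXiv:1301.0543 — 2 statements merged into one kernel-verified Lean document; each statement's English description precedes it below -/
import Mathlib

section
/- (Theorem 4.1) Suppose M_hat(ĝ, ĝ8, ĉ, ω̂) = M_C(g, g8, c), where ĝ is a Lorentzian 3×3 real symmetric matrix, ĝ8 and g8 are invertible 8×8 real symmetric matrices, g is an invertible 3×3 real symmetric matrix, and ĉ, ω̂, c ∈ ℝ. Then g is Lorentzian, i.e. g has exactly one negative and two positive eigenvalues. In other words, the spacetime metric appearing in any (g,C)-frame description of a generalised metric coming from the Lorentzian generalised vielbein necessarily has signature (−,+,+). -/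
/-! The spacetime–dual 6×6 block of either generalised metric is a Kronecker product `K ⊗ g`
with a 2×2 matrix `K` of determinant `s² / det g`, `s` the conformal prefactor, and the
(g,C)-frame is the case `ω = 0`. An equality `K₁ ⊗ ĝ = K₂ ⊗ g` forces `g = μ ĝ` and
`K₁ = μ K₂`; taking determinants, `det g = μ³ det ĝ` and `det K₁ = μ² det K₂` give
`s₁² μ = s₂² > 0`, so `μ > 0` and `g` has the signature of `ĝ`. -/

open Matrix

/-- The (g,C)-frame generalised metric: a 14×14 matrix in 3+3+8 block form. -/
noncomputable def MC (g : Matrix (Fin 3) (Fin 3) ℝ) (g8 : Matrix (Fin 8) (Fin 8) ℝ) (c : ℝ) :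
    Matrix ((Fin 3 ⊕ Fin 3) ⊕ Fin 8) ((Fin 3 ⊕ Fin 3) ⊕ Fin 8) ℝ :=
  |g.det * g8.det| ^ (-(1 : ℝ) / 2) •
    fromBlocks
      (fromBlocks ((1 + c ^ 2 / g.det) • g) ((c / g.det) • g) ((c / g.det) • g)
        ((1 / g.det) • g))
      0 0 g8

/-- The hatted-frame generalised metric, with both a 3-form c and a trivector ω. -/
noncomputable def Mhat (g : Matrix (Fin 3) (Fin 3) ℝ) (g8 : Matrix (Fin 8) (Fin 8) ℝ)
    (c ω : ℝ) : Matrix ((Fin 3 ⊕ Fin 3) ⊕ Fin 8) ((Fin 3 ⊕ Fin 3) ⊕ Fin 8) ℝ :=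
  |g.det * g8.det| ^ (-(1 : ℝ) / 2) •
    fromBlocks
      (fromBlocks (((1 + c * ω) ^ 2 + c ^ 2 / g.det) • g)
        (((1 + c * ω) * ω + c / g.det) • g)
        (((1 + c * ω) * ω + c / g.det) • g)
        ((ω ^ 2 + 1 / g.det) • g))
      0 0 g8

/-- A 3×3 real symmetric (Hermitian) matrix is Lorentzian if it has exactly one negative
and two positive eigenvalues. -/
def Lorentzian3 (g : Matrix (Fin 3) (Fin 3) ℝ) : Prop :=
  ∃ hg : g.IsHermitian,
    {i | hg.eigenvalues i < 0}.ncard = 1 ∧ {i | 0 < hg.eigenvalues i}.ncard = 2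

lemma ncard_neg_eq_one_and_ncard_pos_eq_two_iff (l : Fin 3 → ℝ) :
    {i | l i < 0}.ncard = 1 ∧ {i | 0 < l i}.ncard = 2 ↔ ∏ i, l i < 0 ∧ ∃ i, 0 < l i := by
  classical
  simp only [Set.ncard_eq_toFinset_card', Set.toFinset_ofPred, Finset.card_filter,
    Fin.sum_univ_three, Fin.prod_univ_three, Fin.exists_fin_succ, Fin.exists_fin_zero]
  rcases lt_trichotomy (l 0) 0 with h0 | h0 | h0 <;>
  rcases lt_trichotomy (l 1) 0 with h1 | h1 | h1 <;>
  rcases lt_trichotomy (l 2) 0 with h2 | h2 | h2 <;>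
  simp [h0, h1, h2, not_lt_of_gt, mul_neg_iff, mul_pos_iff]

theorem Matrix.IsHermitian.lorentzian3_iff {g : Matrix (Fin 3) (Fin 3) ℝ} (hg : g.IsHermitian) :
    Lorentzian3 g ↔ g.det < 0 ∧ ∃ x ∈ spectrum ℝ g, 0 < x := by
  rw [hg.det_eq_prod_eigenvalues, hg.spectrum_real_eq_range_eigenvalues, Set.exists_range_iff]
  simp only [RCLike.ofReal_real_eq_id, id]
  rw [← ncard_neg_eq_one_and_ncard_pos_eq_two_iff]
  exact ⟨fun ⟨_, h⟩ => h, fun h => ⟨hg, h⟩⟩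

theorem Lorentzian3.det_neg {g : Matrix (Fin 3) (Fin 3) ℝ} (h : Lorentzian3 g) : g.det < 0 :=
  (h.fst.lorentzian3_iff.mp h).1

theorem Lorentzian3.smul {g : Matrix (Fin 3) (Fin 3) ℝ} (h : Lorentzian3 g) {μ : ℝ} (hμ : 0 < μ) :
    Lorentzian3 (μ • g) := by
  have hg : g.IsHermitian := h.fst
  obtain ⟨hdet, x, hx, hx_pos⟩ := hg.lorentzian3_iff.mp h
  refine (hg.smul (IsSelfAdjoint.all μ)).lorentzian3_iff.mpr ⟨?_, μ * x, ?_, mul_pos hμ hx_pos⟩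
  · rw [det_smul, Fintype.card_fin]
    exact mul_neg_of_pos_of_neg (pow_pos hμ 3) hdet
  · rw [spectrum.smul_eq_smul _ _ ⟨x, hx⟩]
    exact Set.smul_mem_smul_set hx

theorem exists_eq_smul_of_forall_smul_eq {𝕜 V m n : Type*} [Field 𝕜] [AddCommGroup V]
    [Module 𝕜 V] {K₁ K₂ : Matrix m n 𝕜} {v₁ v₂ : V} (h : ∀ a b, K₁ a b • v₁ = K₂ a b • v₂)
    (hK₂ : K₂ ≠ 0) (hv₁ : v₁ ≠ 0) : ∃ μ : 𝕜, K₁ = μ • K₂ ∧ v₂ = μ • v₁ := by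
  obtain ⟨a₀, b₀, hab⟩ : ∃ a b, K₂ a b ≠ 0 := by
    by_contra! h0
    exact hK₂ (Matrix.ext h0)
  have hv₂ : v₂ = (K₁ a₀ b₀ / K₂ a₀ b₀) • v₁ := by
    rw [div_eq_inv_mul, mul_smul, h, inv_smul_smul₀ hab]
  refine ⟨_, ?_, hv₂⟩
  ext a b
  refine smul_left_injective 𝕜 hv₁ ?_
  simp only [h, hv₂, smul_smul, Matrix.smul_apply, smul_eq_mul, mul_comm]

theorem MC_eq_Mhat (g : Matrix (Fin 3) (Fin 3) ℝ) (g8 : Matrix (Fin 8) (Fin 8) ℝ) (c : ℝ) :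
    MC g g8 c = Mhat g g8 c 0 := by
  simp [MC, Mhat]

/-- The upper-left 6×6 block of `Mhat g g8 c ω` is the Kronecker product of this matrix with `g`. -/
noncomputable def Mhat.coeff (g : Matrix (Fin 3) (Fin 3) ℝ) (g8 : Matrix (Fin 8) (Fin 8) ℝ)
    (c ω : ℝ) : Matrix (Fin 2) (Fin 2) ℝ :=
  |g.det * g8.det| ^ (-(1 : ℝ) / 2) •
    !![(1 + c * ω) ^ 2 + c ^ 2 / g.det, (1 + c * ω) * ω + c / g.det;
      (1 + c * ω) * ω + c / g.det, ω ^ 2 + 1 / g.det]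

theorem Mhat.det_coeff (g : Matrix (Fin 3) (Fin 3) ℝ) (g8 : Matrix (Fin 8) (Fin 8) ℝ)
    (c ω : ℝ) : (Mhat.coeff g g8 c ω).det = (|g.det * g8.det| ^ (-(1 : ℝ) / 2)) ^ 2 / g.det := by
  rw [Mhat.coeff, det_smul, det_fin_two_of, Fintype.card_fin]
  ring

theorem Mhat.coeff_smul_eq_of_eq {g₁ g₂ : Matrix (Fin 3) (Fin 3) ℝ}
    {h₁ h₂ : Matrix (Fin 8) (Fin 8) ℝ} {c₁ ω₁ c₂ ω₂ : ℝ}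
    (heq : Mhat g₁ h₁ c₁ ω₁ = Mhat g₂ h₂ c₂ ω₂) (a b : Fin 2) :
    Mhat.coeff g₁ h₁ c₁ ω₁ a b • g₁ = Mhat.coeff g₂ h₂ c₂ ω₂ a b • g₂ := by
  have hblock (x y : Fin 3 ⊕ Fin 3) := congr_fun₂ heq (Sum.inl x) (Sum.inl y)
  ext i j
  fin_cases a <;> fin_cases b
  · simpa [Mhat, Mhat.coeff, mul_assoc] using hblock (.inl i) (.inl j)
  · simpa [Mhat, Mhat.coeff, mul_assoc] using hblock (.inl i) (.inr j)
  · simpa [Mhat, Mhat.coeff, mul_assoc] using hblock (.inr i) (.inl j)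
  · simpa [Mhat, Mhat.coeff, mul_assoc] using hblock (.inr i) (.inr j)

theorem exists_pos_smul_of_Mhat_eq {g₁ g₂ : Matrix (Fin 3) (Fin 3) ℝ}
    {h₁ h₂ : Matrix (Fin 8) (Fin 8) ℝ} {c₁ ω₁ c₂ ω₂ : ℝ} (hg₁ : g₁.det ≠ 0) (hg₂ : g₂.det ≠ 0)
    (hh₂ : h₂.det ≠ 0) (heq : Mhat g₁ h₁ c₁ ω₁ = Mhat g₂ h₂ c₂ ω₂) :
    ∃ μ : ℝ, 0 < μ ∧ g₂ = μ • g₁ := by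
  have hK₁ := Mhat.det_coeff g₁ h₁ c₁ ω₁
  have hK₂ := Mhat.det_coeff g₂ h₂ c₂ ω₂
  set s₁ := |g₁.det * h₁.det| ^ (-(1 : ℝ) / 2)
  set s₂ := |g₂.det * h₂.det| ^ (-(1 : ℝ) / 2)
  have hs₂ : 0 < s₂ := Real.rpow_pos_of_pos (abs_pos.mpr (mul_ne_zero hg₂ hh₂)) _
  have hK₂_ne : Mhat.coeff g₂ h₂ c₂ ω₂ ≠ 0 := by
    intro h
    rw [h, det_zero] at hK₂
    exact div_ne_zero (pow_pos hs₂ 2).ne' hg₂ hK₂.symm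
  obtain ⟨μ, hK, hg⟩ := exists_eq_smul_of_forall_smul_eq (Mhat.coeff_smul_eq_of_eq heq) hK₂_ne
    (fun h => hg₁ (by simp [h]))
  have hdet_g : g₂.det = μ ^ 3 * g₁.det := by rw [hg, det_smul, Fintype.card_fin]
  have hμ : μ ≠ 0 := by rintro rfl; simp [hdet_g] at hg₂
  have hdet_K := congrArg det hK
  rw [det_smul, Fintype.card_fin, hK₁, hK₂, hdet_g] at hdet_K
  field_simp at hdet_K
  exact ⟨μ, pos_of_mul_pos_right (hdet_K ▸ pow_pos hs₂ 2) (sq_nonneg s₁), hg⟩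

theorem stmt_8_general (ghat g : Matrix (Fin 3) (Fin 3) ℝ) (ghat8 g8 : Matrix (Fin 8) (Fin 8) ℝ)
    (hghat : Lorentzian3 ghat)
    (hgdet : g.det ≠ 0) (hg8det : g8.det ≠ 0)
    (chat ωhat c : ℝ)
    (heq : Mhat ghat ghat8 chat ωhat = MC g g8 c) :
    Lorentzian3 g := by
  obtain ⟨μ, hμ, rfl⟩ :=
    exists_pos_smul_of_Mhat_eq hghat.det_neg.ne hgdet hg8det (heq.trans (MC_eq_Mhat g g8 c))
  exact hghat.smul hμ

/-- Theorem 4.1: if a hatted-frame generalised metric built from a Lorentzian ĝ equals a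
(g,C)-frame generalised metric, then the spacetime metric g is necessarily Lorentzian,
i.e. of signature (−,+,+). -/
theorem stmt_8 (ghat g : Matrix (Fin 3) (Fin 3) ℝ) (ghat8 g8 : Matrix (Fin 8) (Fin 8) ℝ)
    (hghat : Lorentzian3 ghat) (hghat8 : ghat8.IsSymm) (hghat8det : ghat8.det ≠ 0)
    (hg : g.IsSymm) (hgdet : g.det ≠ 0) (hg8 : g8.IsSymm) (hg8det : g8.det ≠ 0)
    (chat ωhat c : ℝ)
    (heq : Mhat ghat ghat8 chat ωhat = MC g g8 c) :
    Lorentzian3 g :=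
  stmt_8_general ghat g ghat8 g8 hghat hgdet hg8det chat ωhat c heq
end

section
/- Let g be a Lorentzian 3×3 real symmetric matrix, g8 an invertible 8×8 real symmetric matrix, c ∈ ℝ with c² ≤ |g|, and A ≠ 0. Then there exist no invertible 3×3 real symmetric matrix g', invertible 8×8 real symmetric matrix g8' and c' ∈ ℝ such that U_B(A)ᵀ · M_C(g, g8, c) · U_B(A) = M_C(g', g8', c'): after a timelike Buscher duality with c² ≤ |g| the dual background cannot be described by a metric and 3-form alone. -/
open Matrix

/-- The Buscher duality matrix: [[0, A·1], [−(1/A)·1, 0]] on the first 6 coordinates,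
identity on the 8 transverse coordinates. -/
noncomputable def UB (A : ℝ) : Matrix ((Fin 3 ⊕ Fin 3) ⊕ Fin 8) ((Fin 3 ⊕ Fin 3) ⊕ Fin 8) ℝ :=
  fromBlocks (fromBlocks 0 (A • 1) ((-(1 / A)) • 1) 0) 0 0 1

/-- A Lorentzian 3×3 matrix has negative determinant. -/
lemma lorentzian_det_neg {g : Matrix (Fin 3) (Fin 3) ℝ} (hg : Lorentzian3 g) : g.det < 0 := by
  classical
  obtain ⟨hH, h1, h2⟩ := hg
  rw [Set.ncard_eq_toFinset_card'] at h1 h2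
  simp only [Set.toFinset_setOf] at h1 h2
  set ev := hH.eigenvalues with hev
  have hdisj : Disjoint (Finset.univ.filter fun i => ev i < 0)
      (Finset.univ.filter fun i => 0 < ev i) := by
    rw [Finset.disjoint_filter]
    intro i _ hlt hgt; linarith
  have huniv : ((Finset.univ.filter fun i => ev i < 0) ∪ (Finset.univ.filter fun i => 0 < ev i))
      = Finset.univ := by
    apply Finset.eq_univ_of_card
    rw [Finset.card_union_of_disjoint hdisj, h1, h2]
    simp
  have hall : ∀ i, ev i < 0 ∨ 0 < ev i := by
    intro i
    have hmem : i ∈ ((Finset.univ.filter fun i => ev i < 0) ∪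
        (Finset.univ.filter fun i => 0 < ev i)) := huniv.symm ▸ Finset.mem_univ i
    simpa using hmem
  obtain ⟨n, hn⟩ := Finset.card_eq_one.mp h1
  have hneg : ev n < 0 := by
    have : n ∈ Finset.univ.filter fun i => ev i < 0 := hn ▸ Finset.mem_singleton_self n
    simpa using this
  have hpos : ∀ i, i ≠ n → 0 < ev i := by
    intro i hin
    rcases hall i with h | h
    · exfalso
      have : i ∈ Finset.univ.filter fun i => ev i < 0 := by simpa using h
      rw [hn, Finset.mem_singleton] at this
      exact hin this
    · exact h
  have hdet : g.det = ∏ i, ev i := by simpa using hH.det_eq_prod_eigenvalues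
  rw [hdet, ← Finset.mul_prod_erase Finset.univ ev (Finset.mem_univ n)]
  apply mul_neg_of_neg_of_pos hneg
  apply Finset.prod_pos
  intro i hi
  exact hpos i (Finset.mem_erase.mp hi).1

/-- Timelike Buscher duality with c² ≤ |g| (|g| = −det g): the dual background cannot be
described by a metric and 3-form alone. -/
theorem stmt_16 (g : Matrix (Fin 3) (Fin 3) ℝ) (g8 : Matrix (Fin 8) (Fin 8) ℝ)
    (hg : Lorentzian3 g) (hg8 : g8.IsSymm) (hg8det : g8.det ≠ 0) (c A : ℝ)
    (hc : c ^ 2 ≤ -g.det) (hA : A ≠ 0) :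
    ¬ ∃ (g' : Matrix (Fin 3) (Fin 3) ℝ) (g8' : Matrix (Fin 8) (Fin 8) ℝ) (c' : ℝ),
        g'.IsSymm ∧ g'.det ≠ 0 ∧ g8'.IsSymm ∧ g8'.det ≠ 0 ∧
        (UB A)ᵀ * MC g g8 c * UB A = MC g' g8' c' := by
  rintro ⟨g', g8', c', hsymm', hd', hsymm8', hd8', heq⟩
  have hdet : g.det < 0 := lorentzian_det_neg hg
  -- extract the (2,2) block of the first 6×6 block from the matrix equation
  have h1 := congrArg (fun M => Matrix.toBlocks₂₂ (Matrix.toBlocks₁₁ M)) heq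
  simp only [MC, UB, Matrix.fromBlocks_transpose, Matrix.transpose_zero, Matrix.transpose_smul,
    Matrix.transpose_one, Matrix.mul_smul, Matrix.smul_mul, Matrix.fromBlocks_multiply,
    Matrix.fromBlocks_smul, Matrix.toBlocks_fromBlocks₁₁, Matrix.toBlocks_fromBlocks₂₂,
    Matrix.mul_zero, Matrix.zero_mul, Matrix.mul_one, Matrix.one_mul, add_zero, zero_add,
    smul_zero, smul_smul] at h1
  -- take determinants
  have h2 := congrArg Matrix.det h1
  simp only [Matrix.det_smul, Fintype.card_fin, Fintype.card_sum] at h2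
  set s : ℝ := |g.det * g8.det| ^ (-1 / 2 : ℝ) with hs
  set s' : ℝ := |g'.det * g8'.det| ^ (-1 / 2 : ℝ) with hs'
  have hspos : 0 < s := Real.rpow_pos_of_pos (abs_pos.mpr (mul_ne_zero hdet.ne hg8det)) _
  have hs'pos : 0 < s' := Real.rpow_pos_of_pos (abs_pos.mpr (mul_ne_zero hd' hd8')) _
  have ha : 0 ≤ 1 + c ^ 2 / g.det := by
    have h3 : (-1 : ℝ) ≤ c ^ 2 / g.det := by
      rw [le_div_iff_of_neg hdet]; linarith
    linarith
  have hL : (A * (s * (1 + c ^ 2 / g.det) * A)) ^ 3 * g.det ≤ 0 := by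
    have hk : 0 ≤ A * (s * (1 + c ^ 2 / g.det) * A) := by
      have h4 : A * (s * (1 + c ^ 2 / g.det) * A) = s * (1 + c ^ 2 / g.det) * A ^ 2 := by ring
      rw [h4]
      exact mul_nonneg (mul_nonneg hspos.le ha) (sq_nonneg A)
    have h5 : 0 ≤ (A * (s * (1 + c ^ 2 / g.det) * A)) ^ 3 := pow_nonneg hk 3
    nlinarith
  have hR : 0 < (s' * (1 / g'.det)) ^ 3 * g'.det := by
    have h6 : (s' * (1 / g'.det)) ^ 3 * g'.det = s' ^ 3 / g'.det ^ 2 := by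
      field_simp
    rw [h6]
    positivity
  linarith [h2, hL, hR]
end
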